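/- Let n ≥ 2 and let λ₁ ≥ λ₂ ≥ ⋯ ≥ λₙ be real numbers satisfying Θ(λ) ≥ (n−2)·π/2. Then λ₁ + (n−1)·λₙ ≥ 0. -/
import Mathlib


open Real

lemma arctan_subadd {a b : ℝ} (ha : 0 ≤ a) (hb : 0 ≤ b) :
    Real.arctan (a + b) ≤ Real.arctan a + Real.arctan b := by
  rcases lt_or_ge (a * b) 1 with h | h
  · rw [Real.arctan_add h]
    apply Real.arctan_strictMono.monotone.imp
    rw [le_div_iff₀ (by nlinarith)]
    nlinarith [mul_nonneg (mul_nonneg ha hb) (add_nonneg ha hb)]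
  · -- then arctan a + arctan b ≥ π/2 > arctan (a+b)
    have ha' : 0 < a := by nlinarith
    have hb' : 0 < b := by nlinarith
    have h1 : Real.arctan b⁻¹ ≤ Real.arctan a := by
      apply Real.arctan_strictMono.monotone.imp
      rw [inv_le_iff_one_le_mul₀ hb']
      linarith [mul_comm a b]
    rw [Real.arctan_inv_of_pos hb'] at h1
    have := Real.arctan_lt_pi_div_two (a + b)
    linarith

lemma arctan_nsmul_le (k : ℕ) {x : ℝ} (hx : 0 ≤ x) :
    Real.arctan ((k : ℝ) * x) ≤ k * Real.arctan x := by
  induction k with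
  | zero => simp
  | succ m ih =>
    push_cast
    have : ((m : ℝ) + 1) * x = (m : ℝ) * x + x := by ring
    rw [this]
    calc Real.arctan ((m : ℝ) * x + x) ≤ Real.arctan ((m : ℝ) * x) + Real.arctan x :=
          arctan_subadd (by positivity) hx
      _ ≤ (m : ℝ) * Real.arctan x + Real.arctan x := by linarith
      _ = ((m : ℝ) + 1) * Real.arctan x := by ring

/-- Lemma 2.1(ii): if `λ₁ ≥ ⋯ ≥ λₙ` and `Θ(λ) ≥ (n-2)π/2`, then
`λ₁ + (n-1)·λₙ ≥ 0`. -/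
theorem stmt_1 (n : ℕ) (hn : 2 ≤ n) (l : Fin n → ℝ)
    (hdec : ∀ i j : Fin n, i ≤ j → l j ≤ l i)
    (hΘ : ((n : ℝ) - 2) * (π / 2) ≤ ∑ i, Real.arctan (l i)) :
    0 ≤ l ⟨0, by omega⟩ + ((n : ℝ) - 1) * l ⟨n - 1, by omega⟩ := by
  set i0 : Fin n := ⟨0, by omega⟩
  set iN : Fin n := ⟨n - 1, by omega⟩
  have h0N : l iN ≤ l i0 := hdec i0 iN (by simp [i0, iN, Fin.le_def])
  rcases le_or_gt 0 (l iN) with h | h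
  · have : (0:ℝ) ≤ (n:ℝ) - 1 := by
      have : (2:ℝ) ≤ n := by exact_mod_cast hn
      linarith
    nlinarith
  -- λₙ < 0; set μ = -λₙ > 0
  by_contra hcon
  push_neg at hcon
  set μ : ℝ := -(l iN) with hμ
  have hμpos : 0 < μ := by simp [hμ]; linarith
  have hlt : l i0 < ((n:ℝ) - 1) * μ := by simp [hμ]; nlinarith
  -- sum bound: ∑_{i ≠ iN} arctan l i ≤ (n-1) arctan (l i0)
  have hsplit : ∑ i, Real.arctan (l i)
      = ∑ i ∈ Finset.univ.erase iN, Real.arctan (l i) + Real.arctan (l iN) := by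
    rw [Finset.sum_erase_add _ _ (Finset.mem_univ iN)]
  have hcard : (Finset.univ.erase iN).card = n - 1 := by
    rw [Finset.card_erase_of_mem (Finset.mem_univ iN)]
    simp
  have hbound : ∑ i ∈ Finset.univ.erase iN, Real.arctan (l i)
      ≤ ((n : ℝ) - 1) * Real.arctan (l i0) := by
    have := Finset.sum_le_card_nsmul (Finset.univ.erase iN)
      (fun i => Real.arctan (l i)) (Real.arctan (l i0))
      (fun i _ => Real.arctan_strictMono.monotone (hdec i0 i (by simp [i0, Fin.le_def])))
    rw [hcard] at this
    have hn1 : ((n - 1 : ℕ) : ℝ) = (n : ℝ) - 1 := by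
      have : 1 ≤ n := by omega
      push_cast [this]
      ring
    calc ∑ i ∈ Finset.univ.erase iN, Real.arctan (l i)
        ≤ (n - 1) • Real.arctan (l i0) := this
      _ = ((n : ℝ) - 1) * Real.arctan (l i0) := by rw [nsmul_eq_mul, hn1]
  -- key inequality
  have hkey : ((n:ℝ) - 1) * Real.arctan (((n:ℝ) - 1) * μ) - Real.arctan μ
      ≤ ((n:ℝ) - 2) * (π / 2) := by
    have h1 : Real.arctan μ⁻¹ = π / 2 - Real.arctan μ := Real.arctan_inv_of_pos hμpos
    have hprod : ((n:ℝ) - 1) * μ > 0 := by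
      have : (2:ℝ) ≤ n := by exact_mod_cast hn
      nlinarith
    have h2 : Real.arctan (((n:ℝ) - 1) * μ)⁻¹ = π / 2 - Real.arctan (((n:ℝ) - 1) * μ) :=
      Real.arctan_inv_of_pos hprod
    -- arctan μ⁻¹ = arctan ((n-1) * ((n-1)μ)⁻¹) ≤ (n-1) arctan ((n-1)μ)⁻¹
    have h3 : Real.arctan μ⁻¹ ≤ ((n:ℝ) - 1) * Real.arctan (((n:ℝ) - 1) * μ)⁻¹ := by
      have hn1 : ((n - 1 : ℕ) : ℝ) = (n : ℝ) - 1 := by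
        have : 1 ≤ n := by omega
        push_cast [this]; ring
      have hn2' : (2:ℝ) ≤ n := by exact_mod_cast hn
      have heq : μ⁻¹ = ((n - 1 : ℕ) : ℝ) * (((n:ℝ) - 1) * μ)⁻¹ := by
        rw [hn1, mul_inv, ← mul_assoc, mul_inv_cancel₀ (by linarith : (n:ℝ) - 1 ≠ 0), one_mul]
      rw [heq, ← hn1]
      exact arctan_nsmul_le (n - 1) (by positivity)
    rw [h1, h2] at h3
    have hn2 : (2:ℝ) ≤ n := by exact_mod_cast hn
    nlinarith
  have hstrict : Real.arctan (l i0) < Real.arctan (((n:ℝ) - 1) * μ) :=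
    Real.arctan_strictMono hlt
  have harcN : Real.arctan (l iN) = - Real.arctan μ := by
    rw [hμ, Real.arctan_neg, neg_neg]
  have hn1pos : (0:ℝ) < (n:ℝ) - 1 := by
    have : (2:ℝ) ≤ n := by exact_mod_cast hn
    linarith
  rw [hsplit, harcN] at hΘ
  nlinarith
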